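/- arXiv:1902.03819 — 3 statements merged into one kernel-verified Lean document; each statement's English description precedes it below -/
import Mathlib

section
/- Consider the delayed Cucker-Smale system dx_i/dt = v_i, dv_i/dt = (1/h(t)) ∑_{k=1}^N ∫_{t−τ(t)}^t α(t−s) φ(x_k(s), x_i(t)) (v_k(s) − v_i(t)) ds with normalized weights φ (so ∑_k φ(x_k(s), x_i(t)) = 1 and φ ≥ 0), and continuous initial data on [−τ₀, 0] with R_v = max_{s∈[−τ₀,0]} max_i |v_i^0(s)|. Then any local C¹ solution is global and satisfies max_{1≤i≤N} |v_i(t)| ≤ R_v for all t ≥ −τ₀. -/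
/-!
Each velocity relaxes towards a weighted average of past velocities: `v_i' = A_i - v_i`, where
the weights `α (t - s) * φ` are nonnegative with total mass `h t`, so `‖A_i t‖` is at most the
largest speed on `[-τ₀, t]`. If the maximal speed first reached `R_v + ε` at some time `T > 0`,
the integrating factor `e^t` on `[T/2, T]` would give
`‖v T‖ ≤ M + e^{-T/2} (‖v (T/2)‖ - M) < M` for `M = R_v + ε`, a contradiction.
-/

open MeasureTheory Set Finset

section Relaxation

variable {F : Type*} [NormedAddCommGroup F] [NormedSpace ℝ F] {V A : ℝ → F}

theorem norm_le_of_hasDerivWithinAt_sub_self {a b M : ℝ} (hab : a ≤ b)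
    (hV : ContinuousOn V (Icc a b))
    (hVA : ∀ t ∈ Ico a b, HasDerivWithinAt V (A t - V t) (Ici t) t)
    (hA : ∀ t ∈ Ico a b, ‖A t‖ ≤ M) :
    ‖V b‖ ≤ M + Real.exp (a - b) * (‖V a‖ - M) := by
  have hf' : ∀ t ∈ Ico a b, HasDerivWithinAt (Real.exp • V) (Real.exp t • A t) (Ici t) t := by
    intro t ht
    convert (Real.hasDerivAt_exp t).hasDerivWithinAt.smul (hVA t ht) using 1
    rw [smul_sub, sub_add_cancel]
  have hB : ∀ t, HasDerivAt (fun s => Real.exp a * ‖V a‖ + M * (Real.exp s - Real.exp a))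
      (M * Real.exp t) t := fun t =>
    (((Real.hasDerivAt_exp t).sub_const (Real.exp a)).const_mul M).const_add _
  have hfb := image_norm_le_of_norm_deriv_right_le_deriv_boundary
    (Real.continuous_exp.continuousOn.smul hV) hf' (by simp [norm_smul]) hB
    (fun t ht => by
      rw [norm_smul, Real.norm_of_nonneg (Real.exp_pos t).le, mul_comm]
      exact mul_le_mul_of_nonneg_right (hA t ht) (Real.exp_pos t).le)
    ⟨hab, le_rfl⟩
  rw [Pi.smul_apply', norm_smul, Real.norm_of_nonneg (Real.exp_pos b).le] at hfb
  calc ‖V b‖ = Real.exp b * ‖V b‖ / Real.exp b := by field_simp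
    _ ≤ (Real.exp a * ‖V a‖ + M * (Real.exp b - Real.exp a)) / Real.exp b := by gcongr
    _ = M + Real.exp (a - b) * (‖V a‖ - M) := by rw [Real.exp_sub]; field_simp; ring

theorem norm_le_of_hasDerivAt_sub_self_of_norm_le_past {t₀ R : ℝ} (ht₀ : t₀ ≤ 0)
    (hV : ContinuousOn V (Ici t₀)) (hVA : ∀ t > 0, HasDerivAt V (A t - V t) t)
    (hA : ∀ t > 0, ∀ M, (∀ s ∈ Icc t₀ t, ‖V s‖ ≤ M) → ‖A t‖ ≤ M)
    (hinit : ∀ s ∈ Icc t₀ 0, ‖V s‖ ≤ R) :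
    ∀ t ≥ t₀, ‖V t‖ ≤ R := by
  intro t ht
  refine le_of_forall_pos_lt_add fun ε hε => ?_
  by_contra! hbad
  set S := Ici t₀ ∩ (fun s => ‖V s‖) ⁻¹' Ici (R + ε)
  have hSbdd : BddBelow S := ⟨t₀, fun s hs => hs.1⟩
  have hT : sInf S ∈ S :=
    (hV.norm.preimage_isClosed_of_isClosed isClosed_Ici isClosed_Ici).csInf_mem ⟨t, ht, hbad⟩ hSbdd
  set T := sInf S
  have hbelow : ∀ s ∈ Ico t₀ T, ‖V s‖ < R + ε := fun s hs => by
    by_contra! h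
    exact (csInf_le hSbdd ⟨hs.1, h⟩).not_gt hs.2
  have hT0 : 0 < T := by
    by_contra! h
    linarith [hinit T ⟨hT.1, h⟩, show R + ε ≤ ‖V T‖ from hT.2]
  have hVT := norm_le_of_hasDerivWithinAt_sub_self (a := T / 2) (b := T) (M := R + ε)
    (by linarith) (hV.mono fun s hs => Set.mem_Ici.2 (by linarith [hs.1]))
    (fun s hs => (hVA s (by linarith [hs.1])).hasDerivWithinAt)
    (fun s hs => hA s (by linarith [hs.1]) _ fun u hu =>
      (hbelow u ⟨hu.1, hu.2.trans_lt hs.2⟩).le)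
  have := mul_neg_of_pos_of_neg (Real.exp_pos (T / 2 - T))
    (sub_neg.2 (hbelow (T / 2) ⟨by linarith, by linarith⟩))
  linarith [show R + ε ≤ ‖V T‖ from hT.2]

end Relaxation

section WeightedAverage

variable {ι X E : Type*} [Fintype ι] [MeasurableSpace X] [NormedAddCommGroup E]
  [NormedSpace ℝ E] {μ : Measure X} {w : ι → X → ℝ} {f : ι → X → E} {M : ℝ}

theorem norm_sum_integral_smul_le (hw₀ : ∀ k, ∀ᵐ x ∂μ, 0 ≤ w k x) (hw : ∀ k, Integrable (w k) μ)
    (hfM : ∀ k, ∀ᵐ x ∂μ, ‖f k x‖ ≤ M) :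
    ‖∑ k, ∫ x, w k x • f k x ∂μ‖ ≤ (∑ k, ∫ x, w k x ∂μ) * M := by
  rw [Finset.sum_mul]
  refine (norm_sum_le _ _).trans (Finset.sum_le_sum fun k _ => ?_)
  rw [← integral_mul_const]
  refine norm_integral_le_of_norm_le ((hw k).mul_const M) ?_
  filter_upwards [hw₀ k, hfM k] with x hx₀ hxM
  rw [norm_smul, Real.norm_of_nonneg hx₀]
  exact mul_le_mul_of_nonneg_left hxM hx₀

theorem norm_add_inv_smul_sum_integral_smul_sub_le [CompleteSpace E]
    (hw₀ : ∀ k, ∀ᵐ x ∂μ, 0 ≤ w k x) (hw : ∀ k, Integrable (w k) μ)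
    (hf : ∀ k, AEStronglyMeasurable (f k) μ)
    (hfM : ∀ k, ∀ᵐ x ∂μ, ‖f k x‖ ≤ M) (hmass : 0 < ∑ k, ∫ x, w k x ∂μ) (c : E) :
    ‖c + (∑ k, ∫ x, w k x ∂μ)⁻¹ • ∑ k, ∫ x, w k x • (f k x - c) ∂μ‖ ≤ M := by
  set H := ∑ k, ∫ x, w k x ∂μ
  have hsplit : ∑ k, ∫ x, w k x • (f k x - c) ∂μ = ∑ k, ∫ x, w k x • f k x ∂μ - H • c := by
    simp only [smul_sub, H, Finset.sum_smul, ← Finset.sum_sub_distrib]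
    refine Finset.sum_congr rfl fun k _ => ?_
    rw [← integral_smul_const]
    exact integral_sub ((hw k).smul_bdd M (hf k) (hfM k)) ((hw k).smul_const c)
  rw [hsplit, smul_sub, inv_smul_smul₀ hmass.ne', add_sub_cancel, norm_smul,
    Real.norm_of_nonneg (inv_nonneg.2 hmass.le), inv_mul_le_iff₀ hmass]
  exact norm_sum_integral_smul_le hw₀ hw hfM

end WeightedAverage

section DelayKernel

theorem integrableOn_Ioc_comp_sub_left {α : ℝ → ℝ} {r : ℝ} (hr : 0 ≤ r)
    (hα : IntegrableOn α (Ioc 0 r)) (t : ℝ) :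
    IntegrableOn (fun s => α (t - s)) (Ioc (t - r) t) := by
  have h := (((intervalIntegrable_iff_integrableOn_Ioc_of_le hr).2 hα).comp_sub_left t).symm
  rwa [sub_zero, intervalIntegrable_iff_integrableOn_Ioc_of_le (by linarith)] at h

theorem setIntegral_Ioc_comp_sub_left (α : ℝ → ℝ) {r : ℝ} (hr : 0 ≤ r) (t : ℝ) :
    ∫ s in Ioc (t - r) t, α (t - s) = ∫ s in Ioc 0 r, α s := by
  rw [← intervalIntegral.integral_of_le (by linarith), intervalIntegral.integral_comp_sub_left,
    sub_self, sub_sub_cancel, intervalIntegral.integral_of_le hr]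

variable {ι E : Type*} [Fintype ι] [NormedAddCommGroup E] [NormedSpace ℝ E] [CompleteSpace E]

theorem norm_add_inv_smul_sum_delayed_integral_le {α : ℝ → ℝ} {φ : ι → ℝ → ℝ}
    {v : ι → ℝ → E} {t r M : ℝ} (hr : 0 ≤ r) (hα : ∀ s, 0 ≤ α s)
    (hαint : IntegrableOn α (Ioc 0 r)) (hαpos : 0 < ∫ s in Ioc 0 r, α s)
    (hφ₀ : ∀ k s, 0 ≤ φ k s) (hφ₁ : ∀ s, ∑ k, φ k s = 1)
    (hφm : ∀ k, AEMeasurable (φ k) (volume.restrict (Ioc (t - r) t)))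
    (hv : ∀ k, ContinuousOn (v k) (Icc (t - r) t)) (hvM : ∀ k, ∀ s ∈ Icc (t - r) t, ‖v k s‖ ≤ M)
    (c : E) :
    ‖c + (∫ s in Ioc 0 r, α s)⁻¹ •
      ∑ k, ∫ s in Ioc (t - r) t, (α (t - s) * φ k s) • (v k s - c)‖ ≤ M := by
  have hφ_le_one : ∀ k s, ‖φ k s‖ ≤ 1 := fun k s => by
    rw [Real.norm_of_nonneg (hφ₀ k s), ← hφ₁ s]
    exact single_le_sum (fun j _ => hφ₀ j s) (mem_univ k)
  have hw : ∀ k, IntegrableOn (fun s => α (t - s) * φ k s) (Ioc (t - r) t) := fun k =>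
    (integrableOn_Ioc_comp_sub_left hr hαint t).mul_bdd (hφm k).aestronglyMeasurable
      (ae_of_all _ (hφ_le_one k))
  have hmass : ∑ k, ∫ s in Ioc (t - r) t, α (t - s) * φ k s = ∫ s in Ioc 0 r, α s := by
    rw [← integral_finsetSum _ fun k _ => hw k]
    simp only [← mul_sum, hφ₁, mul_one]
    exact setIntegral_Ioc_comp_sub_left α hr t
  rw [← hmass]
  exact norm_add_inv_smul_sum_integral_smul_sub_le
    (fun k => ae_of_all _ fun s => mul_nonneg (hα _) (hφ₀ k s)) hw
    (fun k => ((hv k).mono Ioc_subset_Icc_self).aestronglyMeasurable measurableSet_Ioc)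
    (fun k => (ae_restrict_iff' measurableSet_Ioc).2
      (ae_of_all _ fun s hs => hvM k s (Ioc_subset_Icc_self hs)))
    (hmass ▸ hαpos) c

end DelayKernel

section CommunicationWeight

variable {ι E : Type*} [Fintype ι] [DecidableEq ι] [NormedAddCommGroup E]

noncomputable def commWeight (ψ : ℝ → ℝ) (x : ι → ℝ → E) (k i : ι) (s t : ℝ) : ℝ :=
  if k = i then 0
  else ψ ‖x k s - x i t‖ / ∑ j ∈ univ.filter (fun j => j ≠ i), ψ ‖x j s - x i t‖

variable {ψ : ℝ → ℝ} {x : ι → ℝ → E}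

theorem commWeight_nonneg (hψ : ∀ r, 0 ≤ ψ r) (k i : ι) (s t : ℝ) :
    0 ≤ commWeight ψ x k i s t := by
  unfold commWeight
  split_ifs
  exacts [le_rfl, div_nonneg (hψ _) (sum_nonneg fun j _ => hψ _)]

theorem sum_commWeight (hψ : ∀ r, 0 < ψ r) {i : ι} (hi : ∃ j, j ≠ i) (s t : ℝ) :
    ∑ k, commWeight ψ x k i s t = 1 := by
  obtain ⟨j, hj⟩ := hi
  have hpos : 0 < ∑ j ∈ univ.filter (fun j => j ≠ i), ψ ‖x j s - x i t‖ :=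
    sum_pos (fun _ _ => hψ _) ⟨j, by simp [hj]⟩
  simp only [commWeight, sum_ite, sum_const_zero, zero_add, ← sum_div]
  exact div_self hpos.ne'

theorem aemeasurable_commWeight (hψ : Measurable ψ) {S : Set ℝ} (hS : MeasurableSet S)
    (hx : ∀ j, ContinuousOn (x j) S) (k i : ι) (t : ℝ) :
    AEMeasurable (fun s => commWeight ψ x k i s t) (volume.restrict S) := by
  have hψx : ∀ j, AEMeasurable (fun s => ψ ‖x j s - x i t‖) (volume.restrict S) := fun j =>
    hψ.comp_aemeasurable (((hx j).sub continuousOn_const).norm.aemeasurable hS)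
  unfold commWeight
  split_ifs
  exacts [aemeasurable_const, (hψx k).div (Finset.aemeasurable_fun_sum _ fun j _ => hψx j)]

end CommunicationWeight

theorem uniform_speed_bound_general
    {d : ℕ} (N : ℕ) (hN : 2 ≤ N)
    (τ₀ τstar : ℝ) (hτstar : 0 < τstar) (hττ : τstar ≤ τ₀)
    (τ : ℝ → ℝ) (hτrange : ∀ t : ℝ, 0 ≤ t → τ t ∈ Icc τstar τ₀)
    (α : ℝ → ℝ) (hα : ∀ s : ℝ, 0 ≤ α s)
    (hαint : IntegrableOn α (Icc 0 τ₀))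
    (hαpos : 0 < ∫ s in Ioc (0 : ℝ) τstar, α s)
    (h : ℝ → ℝ) (hdef : ∀ t : ℝ, h t = ∫ s in Ioc (0 : ℝ) (τ t), α s)
    (ψ : ℝ → ℝ) (hψpos : ∀ r : ℝ, 0 < ψ r)
    (hψmono : Antitone ψ)
    (x v : Fin N → ℝ → EuclideanSpace ℝ (Fin d))
    (φ : Fin N → Fin N → ℝ → ℝ → ℝ)
    (hφ : ∀ k i : Fin N, ∀ s t : ℝ, φ k i s t =
      if k = i then 0
      else ψ ‖x k s - x i t‖ /
        ∑ j ∈ Finset.univ.filter (fun j => j ≠ i), ψ ‖x j s - x i t‖)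
    (hcont : ∀ i : Fin N, ContinuousOn (x i) (Ici (-τ₀)) ∧ ContinuousOn (v i) (Ici (-τ₀)))
    (hv : ∀ i : Fin N, ∀ t : ℝ, 0 < t → HasDerivAt (v i)
      ((h t)⁻¹ • ∑ k : Fin N,
        ∫ s in Ioc (t - τ t) t, (α (t - s) * φ k i s t) • (v k s - v i t)) t)
    (Rv : ℝ)
    (hRv : IsGreatest {r : ℝ | ∃ i : Fin N, ∃ s ∈ Icc (-τ₀) (0 : ℝ), r = ‖v i s‖} Rv) :
    ∀ t : ℝ, -τ₀ ≤ t → ∀ i : Fin N, ‖v i t‖ ≤ Rv := by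
  obtain rfl : φ = commWeight ψ x := by ext k i s t; exact hφ k i s t
  have : Nontrivial (Fin N) := Fin.nontrivial_iff_two_le.2 hN
  have hτ₀ : 0 ≤ τ₀ := hτstar.le.trans hττ
  have hinit : ∀ s ∈ Icc (-τ₀) 0, ∀ i, ‖v i s‖ ≤ Rv := fun s hs i => hRv.2 ⟨i, s, hs, rfl⟩
  have hRv₀ : 0 ≤ Rv := (norm_nonneg _).trans (hinit 0 ⟨by linarith, le_rfl⟩ ⟨0, by omega⟩)
  -- the sup norm on `Fin N → EuclideanSpace ℝ (Fin d)` is the maximal speed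
  have hspeed := norm_le_of_hasDerivAt_sub_self_of_norm_le_past (V := fun t i => v i t)
    (A := fun t i => v i t + (h t)⁻¹ • ∑ k, ∫ s in Ioc (t - τ t) t,
      (α (t - s) * commWeight ψ x k i s t) • (v k s - v i t))
    (by linarith) (continuousOn_pi.2 fun i => (hcont i).2)
    (fun t ht => hasDerivAt_pi.2 fun i => by simpa using hv i t ht) ?_
    (fun s hs => (pi_norm_le_iff_of_nonneg hRv₀).2 (hinit s hs))
  · exact fun t ht i => (norm_le_pi_norm _ i).trans (hspeed t ht)
  intro t ht M hM
  obtain ⟨hτ₁, hτ₂⟩ := hτrange t ht.le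
  have hpast : Icc (t - τ t) t ⊆ Icc (-τ₀) t := Icc_subset_Icc_left (by linarith)
  have hαint' : IntegrableOn α (Ioc 0 (τ t)) :=
    hαint.mono_set (Ioc_subset_Icc_self.trans (Icc_subset_Icc_right hτ₂))
  have hαpos' : 0 < ∫ s in Ioc 0 (τ t), α s := hαpos.trans_le <|
    setIntegral_mono_set hαint' (ae_of_all _ hα) (Ioc_subset_Ioc_right hτ₁).eventuallyLE
  refine (pi_norm_le_iff_of_nonneg ((norm_nonneg _).trans (hM t ⟨by linarith, le_rfl⟩))).2
    fun i => ?_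
  rw [hdef]
  exact norm_add_inv_smul_sum_delayed_integral_le (by linarith) hα hαint' hαpos'
    (fun k s => commWeight_nonneg (fun r => (hψpos r).le) k i s t)
    (fun s => sum_commWeight hψpos (exists_ne i) s t)
    (fun k => aemeasurable_commWeight hψmono.measurable measurableSet_Ioc
      (fun j => (hcont j).1.mono fun s hs => (hpast (Ioc_subset_Icc_self hs)).1) k i t)
    (fun k => (hcont k).2.mono fun s hs => (hpast hs).1)
    (fun k s hs => (norm_le_pi_norm (fun j => v j s) k).trans (hM s (hpast hs))) (v i t)

theorem uniform_speed_bound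
    {d : ℕ} (N : ℕ) (hN : 2 ≤ N)
    (τ₀ τstar : ℝ) (hτstar : 0 < τstar) (hττ : τstar ≤ τ₀)
    (τ : ℝ → ℝ) (hτrange : ∀ t : ℝ, 0 ≤ t → τ t ∈ Icc τstar τ₀)
    (hτmono : AntitoneOn τ (Ici 0))
    (α : ℝ → ℝ) (hα : ∀ s : ℝ, 0 ≤ α s)
    (hαint : IntegrableOn α (Icc 0 τ₀))
    (hαpos : 0 < ∫ s in Ioc (0 : ℝ) τstar, α s)
    (h : ℝ → ℝ) (hdef : ∀ t : ℝ, h t = ∫ s in Ioc (0 : ℝ) (τ t), α s)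
    (ψ : ℝ → ℝ) (hψpos : ∀ r : ℝ, 0 < ψ r) (hψb : ∀ r : ℝ, ψ r ≤ 1)
    (hψmono : Antitone ψ) (hψ0 : ψ 0 = 1)
    (x v : Fin N → ℝ → EuclideanSpace ℝ (Fin d))
    (φ : Fin N → Fin N → ℝ → ℝ → ℝ)
    (hφ : ∀ k i : Fin N, ∀ s t : ℝ, φ k i s t =
      if k = i then 0
      else ψ ‖x k s - x i t‖ /
        ∑ j ∈ Finset.univ.filter (fun j => j ≠ i), ψ ‖x j s - x i t‖)
    (hcont : ∀ i : Fin N, ContinuousOn (x i) (Ici (-τ₀)) ∧ ContinuousOn (v i) (Ici (-τ₀)))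
    (hx : ∀ i : Fin N, ∀ t : ℝ, 0 < t → HasDerivAt (x i) (v i t) t)
    (hv : ∀ i : Fin N, ∀ t : ℝ, 0 < t → HasDerivAt (v i)
      ((h t)⁻¹ • ∑ k : Fin N,
        ∫ s in Ioc (t - τ t) t, (α (t - s) * φ k i s t) • (v k s - v i t)) t)
    (Rv : ℝ)
    (hRv : IsGreatest {r : ℝ | ∃ i : Fin N, ∃ s ∈ Icc (-τ₀) (0 : ℝ), r = ‖v i s‖} Rv) :
    ∀ t : ℝ, -τ₀ ≤ t → ∀ i : Fin N, ‖v i t‖ ≤ Rv :=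
  uniform_speed_bound_general N hN τ₀ τstar hτstar hττ τ hτrange α hα hαint hαpos h hdef ψ hψpos
    hψmono x v φ hφ hcont hv Rv hRv
end

section
/- Let ψ : [0,∞) → (0,∞) be bounded by 1, positive, nonincreasing and Lipschitz, and let f be a compactly supported probability measure on ℝ^d × ℝ^d contained in the ball B(0,R). Define F[f](x,v) = (∫ ψ(|x−y|)(w−v) df(y,w)) / (∫ ψ(|x−y|) df(y,w)). Then there exists a constant C = C(R, ψ) such that |F[f](x,v)| ≤ C and |F[f](x,v) − F[f](x̃,ṽ)| ≤ C(|x−x̃| + |v−ṽ|) for all (x,v), (x̃,ṽ) ∈ B(0,R). -/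
open MeasureTheory Set

theorem alignment_force_bounded_lipschitz
    {d : ℕ} (R : ℝ) (hR : 0 < R)
    (ψ : ℝ → ℝ)
    (hψpos : ∀ r : ℝ, 0 ≤ r → 0 < ψ r)
    (hψb : ∀ r : ℝ, 0 ≤ r → ψ r ≤ 1)
    (hψmono : AntitoneOn ψ (Ici 0))
    (K : NNReal) (hψlip : LipschitzOnWith K ψ (Ici 0))
    (f : Measure (EuclideanSpace ℝ (Fin d) × EuclideanSpace ℝ (Fin d)))
    [IsProbabilityMeasure f]
    (hsupp : ∀ᵐ yw ∂f, ‖yw.1‖ ≤ R ∧ ‖yw.2‖ ≤ R)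
    (F : EuclideanSpace ℝ (Fin d) → EuclideanSpace ℝ (Fin d) → EuclideanSpace ℝ (Fin d))
    (hF : ∀ x v, F x v =
      (∫ yw, ψ ‖x - yw.1‖ ∂f)⁻¹ • ∫ yw, ψ ‖x - yw.1‖ • (yw.2 - v) ∂f) :
    ∃ C : ℝ, 0 < C ∧
      (∀ x v : EuclideanSpace ℝ (Fin d), ‖x‖ ≤ R → ‖v‖ ≤ R → ‖F x v‖ ≤ C) ∧
      (∀ x v x' v' : EuclideanSpace ℝ (Fin d),
        ‖x‖ ≤ R → ‖v‖ ≤ R → ‖x'‖ ≤ R → ‖v'‖ ≤ R →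
        ‖F x v - F x' v'‖ ≤ C * (‖x - x'‖ + ‖v - v'‖)) := by
  classical
  set m : ℝ := ψ (2 * R) with hm_def
  have hm : 0 < m := hψpos _ (by positivity)
  have hψcont : ContinuousOn ψ (Ici 0) := hψlip.continuousOn
  have hcont : ∀ x : EuclideanSpace ℝ (Fin d),
      Continuous (fun yw : EuclideanSpace ℝ (Fin d) × EuclideanSpace ℝ (Fin d) =>
        ψ ‖x - yw.1‖) := by
    intro x
    exact hψcont.comp_continuous ((continuous_const.sub continuous_fst).norm)
      (fun yw => norm_nonneg _)
  have hint : ∀ x : EuclideanSpace ℝ (Fin d),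
      Integrable (fun yw : EuclideanSpace ℝ (Fin d) × EuclideanSpace ℝ (Fin d) =>
        ψ ‖x - yw.1‖) f := by
    intro x
    refine (integrable_const (1 : ℝ)).mono' (hcont x).aestronglyMeasurable ?_
    filter_upwards with yw
    rw [Real.norm_eq_abs, abs_of_pos (hψpos _ (norm_nonneg _))]
    exact hψb _ (norm_nonneg _)
  have hintv : ∀ (x v : EuclideanSpace ℝ (Fin d)), ‖v‖ ≤ R →
      Integrable (fun yw : EuclideanSpace ℝ (Fin d) × EuclideanSpace ℝ (Fin d) =>
        ψ ‖x - yw.1‖ • (yw.2 - v)) f := by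
    intro x v hv
    refine (integrable_const (2 * R)).mono'
      (((hcont x).smul (continuous_snd.sub continuous_const)).aestronglyMeasurable) ?_
    filter_upwards [hsupp] with yw hyw
    rw [norm_smul, Real.norm_eq_abs, abs_of_pos (hψpos _ (norm_nonneg _))]
    calc ψ ‖x - yw.1‖ * ‖yw.2 - v‖ ≤ 1 * ‖yw.2 - v‖ :=
          mul_le_mul_of_nonneg_right (hψb _ (norm_nonneg _)) (norm_nonneg _)
      _ ≤ 2 * R := by
          rw [one_mul]
          calc ‖yw.2 - v‖ ≤ ‖yw.2‖ + ‖v‖ := norm_sub_le _ _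
            _ ≤ 2 * R := by linarith [hyw.2]
  have hD_lb : ∀ x : EuclideanSpace ℝ (Fin d), ‖x‖ ≤ R →
      m ≤ ∫ yw, ψ ‖x - yw.1‖ ∂f := by
    intro x hx
    have h1 : (∫ _ : EuclideanSpace ℝ (Fin d) × EuclideanSpace ℝ (Fin d), m ∂f)
        ≤ ∫ yw, ψ ‖x - yw.1‖ ∂f := by
      refine integral_mono_ae (integrable_const m) (hint x) ?_
      filter_upwards [hsupp] with yw hyw
      refine hψmono (mem_Ici.2 (norm_nonneg _)) (mem_Ici.2 (by positivity)) ?_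
      calc ‖x - yw.1‖ ≤ ‖x‖ + ‖yw.1‖ := norm_sub_le _ _
        _ ≤ 2 * R := by linarith [hyw.1]
    simpa using h1
  have hD_pos : ∀ x : EuclideanSpace ℝ (Fin d), ‖x‖ ≤ R →
      0 < ∫ yw, ψ ‖x - yw.1‖ ∂f :=
    fun x hx => lt_of_lt_of_le hm (hD_lb x hx)
  have hN_bd : ∀ (x v : EuclideanSpace ℝ (Fin d)), ‖v‖ ≤ R →
      ‖∫ yw, ψ ‖x - yw.1‖ • (yw.2 - v) ∂f‖ ≤ 2 * R := by
    intro x v hv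
    have h := norm_integral_le_of_norm_le_const (μ := f)
      (f := fun yw : EuclideanSpace ℝ (Fin d) × EuclideanSpace ℝ (Fin d) =>
        ψ ‖x - yw.1‖ • (yw.2 - v)) (C := 2 * R) ?_
    · simpa using h
    · filter_upwards [hsupp] with yw hyw
      rw [norm_smul, Real.norm_eq_abs, abs_of_pos (hψpos _ (norm_nonneg _))]
      calc ψ ‖x - yw.1‖ * ‖yw.2 - v‖ ≤ 1 * ‖yw.2 - v‖ :=
            mul_le_mul_of_nonneg_right (hψb _ (norm_nonneg _)) (norm_nonneg _)
        _ ≤ 2 * R := by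
            rw [one_mul]
            calc ‖yw.2 - v‖ ≤ ‖yw.2‖ + ‖v‖ := norm_sub_le _ _
              _ ≤ 2 * R := by linarith [hyw.2]
  have hψpt : ∀ (x x' y : EuclideanSpace ℝ (Fin d)),
      |ψ ‖x - y‖ - ψ ‖x' - y‖| ≤ K * ‖x - x'‖ := by
    intro x x' y
    have h := (lipschitzOnWith_iff_dist_le_mul.1 hψlip) _
      (mem_Ici.2 (norm_nonneg (x - y))) _ (mem_Ici.2 (norm_nonneg (x' - y)))
    rw [Real.dist_eq, Real.dist_eq] at h
    refine h.trans (mul_le_mul_of_nonneg_left ?_ K.2)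
    calc |‖x - y‖ - ‖x' - y‖| ≤ ‖(x - y) - (x' - y)‖ := abs_norm_sub_norm_le _ _
      _ = ‖x - x'‖ := by congr 1; abel
  have hD_lip : ∀ (x x' : EuclideanSpace ℝ (Fin d)),
      |(∫ yw, ψ ‖x - yw.1‖ ∂f) - ∫ yw, ψ ‖x' - yw.1‖ ∂f| ≤ K * ‖x - x'‖ := by
    intro x x'
    rw [← integral_sub (hint x) (hint x')]
    have h := norm_integral_le_of_norm_le_const (μ := f)
      (f := fun yw : EuclideanSpace ℝ (Fin d) × EuclideanSpace ℝ (Fin d) =>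
        ψ ‖x - yw.1‖ - ψ ‖x' - yw.1‖) (C := K * ‖x - x'‖) ?_
    · simpa [Real.norm_eq_abs] using h
    · filter_upwards with yw
      simpa [Real.norm_eq_abs] using hψpt x x' yw.1
  have hN_lip : ∀ (x v x' v' : EuclideanSpace ℝ (Fin d)), ‖v‖ ≤ R → ‖v'‖ ≤ R →
      ‖(∫ yw, ψ ‖x - yw.1‖ • (yw.2 - v) ∂f) - ∫ yw, ψ ‖x' - yw.1‖ • (yw.2 - v') ∂f‖
        ≤ 2 * R * K * ‖x - x'‖ + ‖v - v'‖ := by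
    intro x v x' v' hv hv'
    rw [← integral_sub (hintv x v hv) (hintv x' v' hv')]
    have h := norm_integral_le_of_norm_le_const (μ := f)
      (f := fun yw : EuclideanSpace ℝ (Fin d) × EuclideanSpace ℝ (Fin d) =>
        ψ ‖x - yw.1‖ • (yw.2 - v) - ψ ‖x' - yw.1‖ • (yw.2 - v'))
      (C := 2 * R * K * ‖x - x'‖ + ‖v - v'‖) ?_
    · simpa using h
    · filter_upwards [hsupp] with yw hyw
      have key : ψ ‖x - yw.1‖ • (yw.2 - v) - ψ ‖x' - yw.1‖ • (yw.2 - v')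
          = (ψ ‖x - yw.1‖ - ψ ‖x' - yw.1‖) • (yw.2 - v) + ψ ‖x' - yw.1‖ • (v' - v) := by
        simp only [sub_smul, smul_sub]
        abel
      rw [key]
      refine (norm_add_le _ _).trans ?_
      rw [norm_smul, norm_smul, Real.norm_eq_abs, Real.norm_eq_abs,
        abs_of_pos (hψpos _ (norm_nonneg _))]
      have h1 : |ψ ‖x - yw.1‖ - ψ ‖x' - yw.1‖| * ‖yw.2 - v‖ ≤ K * ‖x - x'‖ * (2 * R) := by
        have hn : ‖yw.2 - v‖ ≤ 2 * R := by
          calc ‖yw.2 - v‖ ≤ ‖yw.2‖ + ‖v‖ := norm_sub_le _ _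
            _ ≤ 2 * R := by linarith [hyw.2]
        exact mul_le_mul (hψpt x x' yw.1) hn (norm_nonneg _) (by positivity)
      have h2 : ψ ‖x' - yw.1‖ * ‖v' - v‖ ≤ ‖v - v'‖ := by
        rw [show ‖v' - v‖ = ‖v - v'‖ from norm_sub_rev _ _]
        calc ψ ‖x' - yw.1‖ * ‖v - v'‖ ≤ 1 * ‖v - v'‖ :=
              mul_le_mul_of_nonneg_right (hψb _ (norm_nonneg _)) (norm_nonneg _)
          _ = ‖v - v'‖ := one_mul _
      linarith [h1, h2]
  refine ⟨m⁻¹ * (2 * R * K + 1) + K * (2 * R) / m ^ 2 + m⁻¹ * (2 * R) + 1, by positivity,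
    ?_, ?_⟩
  · intro x v hx hv
    have hDp := hD_pos x hx
    rw [hF x v, norm_smul, Real.norm_eq_abs, abs_of_pos (inv_pos.2 hDp)]
    have hinv : (∫ yw, ψ ‖x - yw.1‖ ∂f)⁻¹ ≤ m⁻¹ := inv_anti₀ hm (hD_lb x hx)
    have hstep : (∫ yw, ψ ‖x - yw.1‖ ∂f)⁻¹ * ‖∫ yw, ψ ‖x - yw.1‖ • (yw.2 - v) ∂f‖
        ≤ m⁻¹ * (2 * R) :=
      mul_le_mul hinv (hN_bd x v hv) (norm_nonneg _) (le_of_lt (by positivity))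
    have hrest : (0:ℝ) ≤ m⁻¹ * (2 * R * K + 1) + K * (2 * R) / m ^ 2 + 1 := by positivity
    linarith
  · intro x v x' v' hx hv hx' hv'
    set Dx := ∫ yw, ψ ‖x - yw.1‖ ∂f with hDx
    set Dx' := ∫ yw, ψ ‖x' - yw.1‖ ∂f with hDx'
    set N := ∫ yw, ψ ‖x - yw.1‖ • (yw.2 - v) ∂f with hNd
    set N' := ∫ yw, ψ ‖x' - yw.1‖ • (yw.2 - v') ∂f with hN'd
    have hDxp : 0 < Dx := hD_pos x hx
    have hDx'p : 0 < Dx' := hD_pos x' hx'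
    have key : F x v - F x' v' = Dx⁻¹ • (N - N') + (Dx⁻¹ - Dx'⁻¹) • N' := by
      rw [hF x v, hF x' v', smul_sub, sub_smul]
      abel
    rw [key]
    have hb1 : ‖Dx⁻¹ • (N - N')‖ ≤ m⁻¹ * (2 * R * K * ‖x - x'‖ + ‖v - v'‖) := by
      rw [norm_smul, Real.norm_eq_abs, abs_of_pos (inv_pos.2 hDxp)]
      exact mul_le_mul (inv_anti₀ hm (hD_lb x hx))
        (hN_lip x v x' v' hv hv') (norm_nonneg _) (le_of_lt (by positivity))
    have hb2 : ‖(Dx⁻¹ - Dx'⁻¹) • N'‖ ≤ K * ‖x - x'‖ / m ^ 2 * (2 * R) := by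
      rw [norm_smul, Real.norm_eq_abs]
      have hdiff : |Dx⁻¹ - Dx'⁻¹| ≤ K * ‖x - x'‖ / m ^ 2 := by
        rw [inv_sub_inv hDxp.ne' hDx'p.ne', abs_div, abs_of_pos (mul_pos hDxp hDx'p)]
        have hnum : |Dx' - Dx| ≤ K * ‖x - x'‖ := by
          rw [abs_sub_comm]; exact hD_lip x x'
        have hden : m ^ 2 ≤ Dx * Dx' := by
          have h1 := hD_lb x hx
          have h2 := hD_lb x' hx'
          nlinarith
        rw [div_le_div_iff₀ (mul_pos hDxp hDx'p) (by positivity)]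
        nlinarith [abs_nonneg (Dx' - Dx), mul_pos hDxp hDx'p,
          mul_nonneg (mul_nonneg (K.2 : (0:ℝ) ≤ K) (norm_nonneg (x - x'))) hm.le]
      exact mul_le_mul hdiff (hN_bd x' v' hv') (norm_nonneg _) (by positivity)
    refine (norm_add_le _ _).trans ((add_le_add hb1 hb2).trans ?_)
    have e1 : (K : ℝ) * ‖x - x'‖ / m ^ 2 * (2 * R) = K * (2 * R) / m ^ 2 * ‖x - x'‖ := by
      ring
    rw [e1]
    have h1 : (0:ℝ) ≤ (m⁻¹ + m⁻¹ * (2 * R) + 1) * ‖x - x'‖ := by positivity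
    have h2 : (0:ℝ) ≤ (m⁻¹ * (2 * R * K) + K * (2 * R) / m ^ 2 + m⁻¹ * (2 * R) + 1)
        * ‖v - v'‖ := by positivity
    linarith [h1, h2]
end

section
/- Let V : [0,T] → ℝ^d be C¹ and satisfy dV/dt = A(t) − V(t) where |A(t)| ≤ R_V^t := max over past times up to t of the speeds, and suppose R_V^t is nondecreasing with R_V^t determined by sup_{s ≤ t} |V(s)| together with an initial bound R_V^0. Then |V(t)| ≤ R_V^0 for all t ∈ [0,T], i.e., the velocity support radius of the delayed Vlasov alignment equation does not grow: R_V^t ≤ R_V^0, and consequently the spatial support radius satisfies R_X^t ≤ R_X^0 + t R_V^0. -/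
/-!
Multiplying the relaxation equation `V' = A - V` by `eˢ` gives `(eˢ V)' = eˢ A`, so a bound
`‖A‖ ≤ K` on `[0, t]` yields `‖V s‖ ≤ K - (K - R₀) e⁻ˢ`, with `R₀` bounding `‖V 0‖`.
Taking for `K` the running maximum `max R₀ (sup_{[0,t]} ‖V‖)` itself, which bounds the
forcing, this says `K ≤ K - (K - R₀) e⁻ᵗ`, i.e. `K ≤ R₀`. The position bound then follows
from the mean value inequality.
-/

open Set Real

variable {E : Type*} [NormedAddCommGroup E] [NormedSpace ℝ E]

theorem norm_le_of_hasDerivAt_sub_self {V A : ℝ → E} {t R K : ℝ}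
    (hV : ∀ s ∈ Icc 0 t, HasDerivAt V (A s - V s) s)
    (hA : ∀ s ∈ Ico 0 t, ‖A s‖ ≤ K) (hV0 : ‖V 0‖ ≤ R) :
    ∀ s ∈ Icc 0 t, ‖V s‖ ≤ K - (K - R) * exp (-s) := by
  have hderiv : ∀ s ∈ Icc 0 t, HasDerivAt (fun s => exp s • V s) (exp s • A s) s := by
    intro s hs
    have := (hasDerivAt_exp s).smul (hV s hs)
    rwa [smul_sub, sub_add_cancel] at this
  have hbound : ∀ s ∈ Icc 0 t, ‖exp s • V s‖ ≤ R + (exp s - 1) * K := by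
    refine image_norm_le_of_norm_deriv_right_le_deriv_boundary
      (fun s hs => (hderiv s hs).continuousAt.continuousWithinAt)
      (fun s hs => (hderiv s (Ico_subset_Icc_self hs)).hasDerivWithinAt)
      (by simpa using hV0)
      (fun s => (((hasDerivAt_exp s).sub_const 1).mul_const K).const_add R) fun s hs => ?_
    rw [norm_smul, norm_of_nonneg (exp_pos s).le]
    exact mul_le_mul_of_nonneg_left (hA s hs) (exp_pos s).le
  intro s hs
  calc ‖V s‖ = exp (-s) * ‖exp s • V s‖ := by
        rw [norm_smul, norm_of_nonneg (exp_pos s).le, ← mul_assoc, ← exp_add, neg_add_cancel,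
          exp_zero, one_mul]
    _ ≤ exp (-s) * (R + (exp s - 1) * K) :=
        mul_le_mul_of_nonneg_left (hbound s hs) (exp_pos _).le
    _ = K - (K - R) * exp (-s) := by
        rw [exp_neg]
        field_simp
        ring

theorem bddAbove_norm_image_Icc_of_hasDerivAt {V V' : ℝ → E} {a b : ℝ}
    (hV : ∀ s ∈ Icc a b, HasDerivAt V (V' s) s) : BddAbove ((fun r => ‖V r‖) '' Icc a b) :=
  (isCompact_Icc.image_of_continuousOn
    fun s hs => (hV s hs).continuousAt.norm.continuousWithinAt).bddAbove

theorem sSup_norm_image_Icc_le_of_hasDerivAt_sub_self {V A : ℝ → E} {t R : ℝ} (ht : 0 ≤ t)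
    (hV : ∀ s ∈ Icc 0 t, HasDerivAt V (A s - V s) s) (hV0 : ‖V 0‖ ≤ R)
    (hA : ∀ s ∈ Icc 0 t, ‖A s‖ ≤ max R (sSup ((fun r => ‖V r‖) '' Icc 0 s))) :
    sSup ((fun r => ‖V r‖) '' Icc 0 t) ≤ R := by
  have hne : ∀ s ∈ Icc (0 : ℝ) t, ((fun r => ‖V r‖) '' Icc 0 s).Nonempty := fun s hs =>
    (nonempty_Icc.2 hs.1).image _
  have hbdd := bddAbove_norm_image_Icc_of_hasDerivAt hV
  set K := max R (sSup ((fun r => ‖V r‖) '' Icc 0 t))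
  have hAK : ∀ s ∈ Ico 0 t, ‖A s‖ ≤ K := fun s hs =>
    (hA s (Ico_subset_Icc_self hs)).trans <| max_le_max_left R <|
      csSup_le_csSup hbdd (hne s ⟨hs.1, hs.2.le⟩) (image_mono (Icc_subset_Icc_right hs.2.le))
  have hRK : R ≤ K := le_max_left _ _
  have hexp_pos := exp_pos (-t)
  have hexp_le_one : exp (-t) ≤ 1 := exp_le_one_iff.2 (neg_nonpos.2 ht)
  have hsup : sSup ((fun r => ‖V r‖) '' Icc 0 t) ≤ K - (K - R) * exp (-t) := by
    refine csSup_le (hne t ⟨ht, le_rfl⟩) (forall_mem_image.2 fun s hs => ?_)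
    calc ‖V s‖ ≤ K - (K - R) * exp (-s) := norm_le_of_hasDerivAt_sub_self hV hAK hV0 s hs
      _ ≤ K - (K - R) * exp (-t) := by gcongr; exact hs.2
  have hK : K ≤ K - (K - R) * exp (-t) := max_le (by nlinarith) hsup
  have hKR : K ≤ R := by nlinarith
  exact (le_max_right _ _).trans hKR

theorem norm_le_add_mul_of_hasDerivAt {X V : ℝ → E} {t R C : ℝ} (ht : 0 ≤ t)
    (hX : ∀ s ∈ Icc 0 t, HasDerivAt X (V s) s) (hV : ∀ s ∈ Ico 0 t, ‖V s‖ ≤ C)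
    (hX0 : ‖X 0‖ ≤ R) : ‖X t‖ ≤ R + t * C := by
  have hdiff := norm_image_sub_le_of_norm_deriv_le_segment'
    (fun s hs => (hX s hs).hasDerivWithinAt) hV t ⟨ht, le_rfl⟩
  calc ‖X t‖ ≤ ‖X t - X 0‖ + ‖X 0‖ := norm_le_norm_sub_add _ _
    _ ≤ C * (t - 0) + R := add_le_add hdiff hX0
    _ = R + t * C := by ring

theorem characteristics_support_estimate_general
    {d : ℕ} (T : ℝ)
    (V X A : ℝ → EuclideanSpace ℝ (Fin d))
    (RV0 RX0 : ℝ)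
    (RV : ℝ → ℝ)
    (hRV : ∀ t ∈ Icc (0 : ℝ) T,
      RV t = max RV0 (sSup ((fun s => ‖V s‖) '' Icc 0 t)))
    (hV0 : ‖V 0‖ ≤ RV0) (hX0 : ‖X 0‖ ≤ RX0)
    (hVode : ∀ t ∈ Icc (0 : ℝ) T, HasDerivAt V (A t - V t) t)
    (hXode : ∀ t ∈ Icc (0 : ℝ) T, HasDerivAt X (V t) t)
    (hA : ∀ t ∈ Icc (0 : ℝ) T, ‖A t‖ ≤ RV t) :
    ∀ t ∈ Icc (0 : ℝ) T,
      ‖V t‖ ≤ RV0 ∧ RV t ≤ RV0 ∧ ‖X t‖ ≤ RX0 + t * RV0 := by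
  have hIcc : ∀ {t}, t ∈ Icc (0 : ℝ) T → ∀ s ∈ Icc (0 : ℝ) t, s ∈ Icc 0 T :=
    fun ht s hs => ⟨hs.1, hs.2.trans ht.2⟩
  have hsup : ∀ t ∈ Icc (0 : ℝ) T, sSup ((fun s => ‖V s‖) '' Icc 0 t) ≤ RV0 := fun t ht =>
    sSup_norm_image_Icc_le_of_hasDerivAt_sub_self ht.1
      (fun s hs => hVode s (hIcc ht s hs)) hV0
      (fun s hs => (hA s (hIcc ht s hs)).trans_eq (hRV s (hIcc ht s hs)))
  have hV : ∀ t ∈ Icc (0 : ℝ) T, ‖V t‖ ≤ RV0 := fun t ht =>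
    (le_csSup (bddAbove_norm_image_Icc_of_hasDerivAt fun s hs => hVode s (hIcc ht s hs))
      (mem_image_of_mem _ (right_mem_Icc.2 ht.1))).trans (hsup t ht)
  intro t ht
  refine ⟨hV t ht, (hRV t ht).trans_le (max_le le_rfl (hsup t ht)), ?_⟩
  exact norm_le_add_mul_of_hasDerivAt ht.1 (fun s hs => hXode s (hIcc ht s hs))
    (fun s hs => hV s (hIcc ht s (Ico_subset_Icc_self hs))) hX0

theorem characteristics_support_estimate
    {d : ℕ} (T : ℝ) (hT : 0 < T)
    (V X A : ℝ → EuclideanSpace ℝ (Fin d))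
    (RV0 RX0 : ℝ) (hRV0 : 0 ≤ RV0) (hRX0 : 0 ≤ RX0)
    (RV : ℝ → ℝ)
    (hRV : ∀ t ∈ Icc (0 : ℝ) T,
      RV t = max RV0 (sSup ((fun s => ‖V s‖) '' Icc 0 t)))
    (hV0 : ‖V 0‖ ≤ RV0) (hX0 : ‖X 0‖ ≤ RX0)
    (hVc : ContinuousOn V (Icc 0 T))
    (hVode : ∀ t ∈ Icc (0 : ℝ) T, HasDerivAt V (A t - V t) t)
    (hXode : ∀ t ∈ Icc (0 : ℝ) T, HasDerivAt X (V t) t)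
    (hA : ∀ t ∈ Icc (0 : ℝ) T, ‖A t‖ ≤ RV t) :
    ∀ t ∈ Icc (0 : ℝ) T,
      ‖V t‖ ≤ RV0 ∧ RV t ≤ RV0 ∧ ‖X t‖ ≤ RX0 + t * RV0 :=
  characteristics_support_estimate_general T V X A RV0 RX0 RV hRV hV0 hX0 hVode hXode hA
end
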